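/- Let L : ℝⁿ → ℝ be a non-negative convex function with L(0) = 0 and L(x) > 0 for x ≠ 0, satisfying the two-sided Δ₂-condition, and suppose p₋ = Φ_L′(1−) > 1 and write p₊ = Φ_L′(1+). Then the Legendre transform L* also satisfies the two-sided Δ₂-condition; more precisely, L*(rx) ≤ r^{q₊}·L*(x) for all r ≥ 1 and x ∈ ℝⁿ with q₊ = p₋/(p₋ − 1), and L*(rx) ≤ r^{q₋}·L*(x) for all 0 ≤ r ≤ 1 and x ∈ ℝⁿ with q₋ = p₊/(p₊ − 1). -/

import Mathlib

/-!
By convexity and the Δ₂-condition, `Φ_L` is finite, and `L(rsx) ≤ Φ_L(r) Φ_L(s) L(x)` makes it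
submultiplicative. Hence `g(t) = log Φ_L(eᵗ)` is subadditive with `g(0) = 0`, with one-sided
derivatives `p₋` and `p₊` at `0`. A subadditive function lies below its one-sided tangents at `0`
(`g(t) ≤ k g(t/k)` and `k g(t/k) → p t`), which gives `Φ_L(s) ≤ s^{p₋}` on `(0, 1]`,
`Φ_L(s) ≤ s^{p₊}` on `[1, ∞)`, and `p₋ ≤ p₊`, so that also `p₊ > 1`.
Substituting `z = r^{1-q} w` in the supremum defining `L*(rx)` turns `L(cz) ≤ c^p L(z)` into
`L*(rx) ≤ r^q L*(x)` for the conjugate exponent `q`.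
-/

/-- The conjugate (Legendre transform) `L*(y) = sup_z [⟨y, z⟩ − L(z)]`. -/
noncomputable def legendre {n : ℕ} (L : EuclideanSpace ℝ (Fin n) → ℝ)
    (y : EuclideanSpace ℝ (Fin n)) : EReal :=
  ⨆ z : EuclideanSpace ℝ (Fin n), (((inner ℝ y z : ℝ) - L z : ℝ) : EReal)

/-- The Young function associated to `L`: `Φ_L(r) = sup_{x ≠ 0} L(rx)/L(x)`. -/
noncomputable def PhiL {n : ℕ} (L : EuclideanSpace ℝ (Fin n) → ℝ) (r : ℝ) : ℝ :=
  sSup ((fun x => L (r • x) / L x) '' {x : EuclideanSpace ℝ (Fin n) | x ≠ 0})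

open Set Real Filter Topology

section Subadditive

variable {g : ℝ → ℝ} {p t : ℝ} (hsub : ∀ a b, g (a + b) ≤ g a + g b) (hg0 : g 0 = 0)
include hsub hg0

theorem le_mul_of_subadditive_of_hasDerivWithinAt_Ioi (hg : HasDerivWithinAt g p (Ioi 0) 0)
    (ht : 0 ≤ t) : g t ≤ p * t := by
  rcases ht.eq_or_lt with rfl | ht
  · simp [hg0]
  have hmul : ∀ (k : ℕ) (u : ℝ), g (k * u) ≤ k * g u := by
    intro k u
    induction k with
    | zero => simp [hg0]
    | succ k ih =>
      calc g ((k + 1 : ℕ) * u) = g (k * u + u) := by push_cast; ring_nf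
        _ ≤ k * g u + g u := (hsub _ _).trans (by linarith)
        _ = (k + 1 : ℕ) * g u := by push_cast; ring
  have hslope : Tendsto (slope g 0) (𝓝[>] 0) (𝓝 p) :=
    (hasDerivWithinAt_iff_tendsto_slope' (lt_irrefl 0)).mp hg
  have hseq : Tendsto (fun k : ℕ => t / k) atTop (𝓝[>] 0) :=
    tendsto_nhdsWithin_iff.mpr ⟨tendsto_const_div_atTop_nhds_zero_nat t,
      (eventually_gt_atTop 0).mono fun k hk => div_pos ht (Nat.cast_pos.mpr hk)⟩
  rw [mul_comm]
  refine ge_of_tendsto ((hslope.comp hseq).const_mul t)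
    ((eventually_gt_atTop 0).mono fun k hk => ?_)
  have hk : (k : ℝ) ≠ 0 := by positivity
  calc g t = g (k * (t / k)) := by rw [mul_div_cancel₀ _ hk]
    _ ≤ k * g (t / k) := hmul k _
    _ = t * slope g 0 (t / k) := by rw [slope_def_field, hg0, sub_zero, sub_zero]; field_simp

theorem le_mul_of_subadditive_of_hasDerivWithinAt_Iio (hg : HasDerivWithinAt g p (Iio 0) 0)
    (ht : t ≤ 0) : g t ≤ p * t := by
  have hneg : HasDerivWithinAt (fun u => g (-u)) (-p) (Ioi 0) 0 := by
    have hg' : HasDerivWithinAt g p (Iio 0) (-0) := by rwa [neg_zero]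
    have := hg'.comp 0 (hasDerivAt_neg 0).hasDerivWithinAt
      fun u hu => neg_lt_zero.mpr (mem_Ioi.mp hu)
    rwa [mul_neg_one] at this
  simpa using le_mul_of_subadditive_of_hasDerivWithinAt_Ioi (g := fun u => g (-u))
    (fun a b => by simp only [neg_add, hsub]) (by simp [hg0]) hneg (neg_nonneg.mpr ht)

theorem le_of_subadditive_of_hasDerivWithinAt_Iio_Ioi {q : ℝ}
    (hp : HasDerivWithinAt g p (Iio 0) 0) (hq : HasDerivWithinAt g q (Ioi 0) 0) : p ≤ q := by
  refine ge_of_tendsto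
    ((hasDerivWithinAt_iff_tendsto_slope' (s := Ioi 0) (lt_irrefl 0)).mp hq) ?_
  filter_upwards [self_mem_nhdsWithin] with u (hu : 0 < u)
  have hleft := le_mul_of_subadditive_of_hasDerivWithinAt_Iio hsub hg0 hp (neg_nonpos.mpr hu.le)
  have hsum := hsub u (-u)
  rw [add_neg_cancel, hg0] at hsum
  rw [slope_def_field, hg0, sub_zero, sub_zero, le_div_iff₀ hu]
  linarith

end Subadditive

section Submultiplicative

variable {f : ℝ → ℝ} {p : ℝ}

theorem hasDerivWithinAt_log_comp_exp (hf1 : f 1 = 1) {s t : Set ℝ}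
    (hf : HasDerivWithinAt f p t 1) (hst : MapsTo exp s t) :
    HasDerivWithinAt (fun u => log (f (exp u))) p s 0 := by
  have hf' : HasDerivWithinAt f p t (exp 0) := by rwa [exp_zero]
  have h := (hf'.comp 0 (hasDerivAt_exp 0).hasDerivWithinAt hst).log (by simp [hf1])
  simp only [Function.comp_apply, exp_zero, hf1, mul_one, div_one] at h
  exact h

variable (hf_pos : ∀ r, 0 < r → 0 < f r)
include hf_pos

theorem le_rpow_of_log_comp_exp_le {s : ℝ} (hs : 0 < s) (h : log (f (exp (log s))) ≤ p * log s) :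
    f s ≤ s ^ p := by
  rw [exp_log hs] at h
  rw [rpow_def_of_pos hs, mul_comm, ← exp_log (hf_pos s hs)]
  exact exp_le_exp.mpr h

variable (hf_mul : ∀ r s, 0 < r → 0 < s → f (r * s) ≤ f r * f s)
include hf_mul

theorem subadditive_log_comp_exp (a b : ℝ) :
    log (f (exp (a + b))) ≤ log (f (exp a)) + log (f (exp b)) := by
  rw [exp_add, ← log_mul (hf_pos _ (exp_pos a)).ne' (hf_pos _ (exp_pos b)).ne']
  exact log_le_log (hf_pos _ (mul_pos (exp_pos a) (exp_pos b)))
    (hf_mul _ _ (exp_pos a) (exp_pos b))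

variable (hf1 : f 1 = 1)
include hf1

theorem le_rpow_of_submultiplicative_of_hasDerivWithinAt_Ioi
    (hf : HasDerivWithinAt f p (Ioi 1) 1) {s : ℝ} (hs : 1 ≤ s) : f s ≤ s ^ p :=
  le_rpow_of_log_comp_exp_le hf_pos (by linarith) <|
    le_mul_of_subadditive_of_hasDerivWithinAt_Ioi (subadditive_log_comp_exp hf_pos hf_mul)
      (by simp [hf1]) (hasDerivWithinAt_log_comp_exp hf1 hf fun _ => one_lt_exp_iff.mpr)
      (log_nonneg hs)

theorem le_rpow_of_submultiplicative_of_hasDerivWithinAt_Iio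
    (hf : HasDerivWithinAt f p (Iio 1) 1) {s : ℝ} (hs0 : 0 < s) (hs1 : s ≤ 1) : f s ≤ s ^ p :=
  le_rpow_of_log_comp_exp_le hf_pos hs0 <|
    le_mul_of_subadditive_of_hasDerivWithinAt_Iio (subadditive_log_comp_exp hf_pos hf_mul)
      (by simp [hf1]) (hasDerivWithinAt_log_comp_exp hf1 hf fun _ => exp_lt_one_iff.mpr)
      (log_nonpos hs0.le hs1)

theorem le_of_submultiplicative_of_hasDerivWithinAt_Iio_Ioi {q : ℝ}
    (hp : HasDerivWithinAt f p (Iio 1) 1) (hq : HasDerivWithinAt f q (Ioi 1) 1) : p ≤ q :=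
  le_of_subadditive_of_hasDerivWithinAt_Iio_Ioi (subadditive_log_comp_exp hf_pos hf_mul)
    (by simp [hf1]) (hasDerivWithinAt_log_comp_exp hf1 hp fun _ => exp_lt_one_iff.mpr)
    (hasDerivWithinAt_log_comp_exp hf1 hq fun _ => one_lt_exp_iff.mpr)

end Submultiplicative

section DeltaTwo

variable {E : Type*} [AddCommGroup E] [Module ℝ E] {L : E → ℝ}

theorem ConvexOn.apply_smul_le_mul (hconv : ConvexOn ℝ univ L) (h0 : L 0 = 0) {θ : ℝ}
    (hθ0 : 0 ≤ θ) (hθ1 : θ ≤ 1) (x : E) : L (θ • x) ≤ θ * L x := by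
  simpa [h0] using hconv.2 (mem_univ x) (mem_univ 0) hθ0 (sub_nonneg.mpr hθ1) (add_sub_cancel θ 1)

theorem exists_apply_smul_le_mul_of_delta2 (hconv : ConvexOn ℝ univ L) (hnonneg : ∀ x, 0 ≤ L x)
    (h0 : L 0 = 0) (hΔ : ∃ C : ℝ, ∀ x, L ((2 : ℝ) • x) ≤ C * L x) {r : ℝ} (hr : 0 ≤ r) :
    ∃ B : ℝ, ∀ x, L (r • x) ≤ B * L x := by
  obtain ⟨C, hC⟩ := hΔ
  have hpow : ∀ (k : ℕ) x, L ((2 : ℝ) ^ k • x) ≤ max C 0 ^ k * L x := by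
    intro k
    induction k with
    | zero => simp
    | succ k ih =>
      intro x
      calc L ((2 : ℝ) ^ (k + 1) • x) = L ((2 : ℝ) • (2 : ℝ) ^ k • x) := by rw [pow_succ', mul_smul]
        _ ≤ max C 0 * L ((2 : ℝ) ^ k • x) :=
          (hC _).trans (mul_le_mul_of_nonneg_right (le_max_left _ _) (hnonneg _))
        _ ≤ max C 0 * (max C 0 ^ k * L x) := mul_le_mul_of_nonneg_left (ih x) (le_max_right _ _)
        _ = max C 0 ^ (k + 1) * L x := by ring
  obtain ⟨k, hk⟩ := pow_unbounded_of_one_lt r one_lt_two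
  have h2k : (0 : ℝ) < 2 ^ k := by positivity
  have hθ1 : r / 2 ^ k ≤ 1 := (div_le_one h2k).mpr hk.le
  refine ⟨max C 0 ^ k, fun x => ?_⟩
  calc L (r • x) = L ((r / 2 ^ k) • (2 : ℝ) ^ k • x) := by rw [smul_smul, div_mul_cancel₀ _ h2k.ne']
    _ ≤ (r / 2 ^ k) * L ((2 : ℝ) ^ k • x) := hconv.apply_smul_le_mul h0 (by positivity) hθ1 _
    _ ≤ L ((2 : ℝ) ^ k • x) := mul_le_of_le_one_left (hnonneg _) hθ1
    _ ≤ max C 0 ^ k * L x := hpow k x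

end DeltaTwo

section YoungFunction

variable {n : ℕ} {L : EuclideanSpace ℝ (Fin n) → ℝ} (hpos : ∀ x, x ≠ 0 → 0 < L x)
include hpos

theorem bddAbove_phiL_image {r : ℝ} (hB : ∃ B : ℝ, ∀ x, L (r • x) ≤ B * L x) :
    BddAbove ((fun x => L (r • x) / L x) '' {x : EuclideanSpace ℝ (Fin n) | x ≠ 0}) := by
  obtain ⟨B, hB⟩ := hB
  refine ⟨B, ?_⟩
  rintro _ ⟨x, hx, rfl⟩
  exact (div_le_iff₀ (hpos x hx)).mpr (hB x)

theorem apply_smul_le_phiL_mul {r : ℝ} (hB : ∃ B : ℝ, ∀ x, L (r • x) ≤ B * L x)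
    {x : EuclideanSpace ℝ (Fin n)} (hx : x ≠ 0) : L (r • x) ≤ PhiL L r * L x :=
  (div_le_iff₀ (hpos x hx)).mp (le_csSup (bddAbove_phiL_image hpos hB) ⟨x, hx, rfl⟩)

theorem phiL_one [Nontrivial (EuclideanSpace ℝ (Fin n))] : PhiL L 1 = 1 := by
  have hne : {x : EuclideanSpace ℝ (Fin n) | x ≠ 0}.Nonempty := exists_ne 0
  rw [PhiL, image_congr fun x hx => by rw [one_smul, div_self (hpos x hx).ne'],
    hne.image_const, csSup_singleton]

variable (hfin : ∀ r : ℝ, 0 < r → ∃ B : ℝ, ∀ x, L (r • x) ≤ B * L x)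
include hfin

theorem phiL_pos [Nontrivial (EuclideanSpace ℝ (Fin n))] (r : ℝ) (hr : 0 < r) :
    0 < PhiL L r := by
  obtain ⟨x, hx⟩ := exists_ne (0 : EuclideanSpace ℝ (Fin n))
  exact (div_pos (hpos _ (smul_ne_zero hr.ne' hx)) (hpos x hx)).trans_le
    (le_csSup (bddAbove_phiL_image hpos (hfin r hr)) ⟨x, hx, rfl⟩)

theorem phiL_mul_le [Nontrivial (EuclideanSpace ℝ (Fin n))] {r s : ℝ} (hr : 0 < r)
    (hs : 0 < s) : PhiL L (r * s) ≤ PhiL L r * PhiL L s := by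
  refine csSup_le (Nonempty.image _ (exists_ne 0)) ?_
  rintro _ ⟨x, hx, rfl⟩
  rw [div_le_iff₀ (hpos x hx), mul_smul]
  calc L (r • s • x) ≤ PhiL L r * L (s • x) :=
        apply_smul_le_phiL_mul hpos (hfin r hr) (smul_ne_zero hs.ne' hx)
    _ ≤ PhiL L r * (PhiL L s * L x) :=
        mul_le_mul_of_nonneg_left (apply_smul_le_phiL_mul hpos (hfin s hs) hx)
          (phiL_pos hpos hfin r hr).le
    _ = PhiL L r * PhiL L s * L x := by ring

theorem phiL_le_rpow_of_le_one [Nontrivial (EuclideanSpace ℝ (Fin n))] {p : ℝ}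
    (hp : HasDerivWithinAt (PhiL L) p (Iio 1) 1) {s : ℝ} (hs0 : 0 < s) (hs1 : s ≤ 1) :
    PhiL L s ≤ s ^ p :=
  le_rpow_of_submultiplicative_of_hasDerivWithinAt_Iio (phiL_pos hpos hfin)
    (fun _ _ => phiL_mul_le hpos hfin) (phiL_one hpos) hp hs0 hs1

theorem phiL_le_rpow_of_one_le [Nontrivial (EuclideanSpace ℝ (Fin n))] {p : ℝ}
    (hp : HasDerivWithinAt (PhiL L) p (Ioi 1) 1) {s : ℝ} (hs : 1 ≤ s) : PhiL L s ≤ s ^ p :=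
  le_rpow_of_submultiplicative_of_hasDerivWithinAt_Ioi (phiL_pos hpos hfin)
    (fun _ _ => phiL_mul_le hpos hfin) (phiL_one hpos) hp hs

theorem le_of_hasDerivWithinAt_phiL_Iio_Ioi [Nontrivial (EuclideanSpace ℝ (Fin n))] {p q : ℝ}
    (hp : HasDerivWithinAt (PhiL L) p (Iio 1) 1) (hq : HasDerivWithinAt (PhiL L) q (Ioi 1) 1) :
    p ≤ q :=
  le_of_submultiplicative_of_hasDerivWithinAt_Iio_Ioi (phiL_pos hpos hfin)
    (fun _ _ => phiL_mul_le hpos hfin) (phiL_one hpos) hp hq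

theorem apply_smul_le_rpow_of_le_one (h0 : L 0 = 0) {p : ℝ}
    (hp : HasDerivWithinAt (PhiL L) p (Iio 1) 1) {s : ℝ} (hs0 : 0 < s) (hs1 : s ≤ 1)
    (z : EuclideanSpace ℝ (Fin n)) : L (s • z) ≤ s ^ p * L z := by
  rcases eq_or_ne z 0 with rfl | hz
  · simp [h0]
  have : Nontrivial (EuclideanSpace ℝ (Fin n)) := nontrivial_of_ne z 0 hz
  exact (apply_smul_le_phiL_mul hpos (hfin s hs0) hz).trans <|
    mul_le_mul_of_nonneg_right (phiL_le_rpow_of_le_one hpos hfin hp hs0 hs1) (hpos z hz).le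

theorem apply_smul_le_rpow_of_one_le (h0 : L 0 = 0) {p : ℝ}
    (hp : HasDerivWithinAt (PhiL L) p (Ioi 1) 1) {s : ℝ} (hs : 1 ≤ s)
    (z : EuclideanSpace ℝ (Fin n)) : L (s • z) ≤ s ^ p * L z := by
  rcases eq_or_ne z 0 with rfl | hz
  · simp [h0]
  have : Nontrivial (EuclideanSpace ℝ (Fin n)) := nontrivial_of_ne z 0 hz
  exact (apply_smul_le_phiL_mul hpos (hfin s (by linarith)) hz).trans <|
    mul_le_mul_of_nonneg_right (phiL_le_rpow_of_one_le hpos hfin hp hs) (hpos z hz).le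

end YoungFunction

section Legendre

variable {n : ℕ} {L : EuclideanSpace ℝ (Fin n) → ℝ}

theorem legendre_zero_nonpos (hnonneg : ∀ x, 0 ≤ L x) : legendre L 0 ≤ 0 :=
  iSup_le fun z => EReal.coe_nonpos.mpr (by simpa using hnonneg z)

theorem legendre_zero (hnonneg : ∀ x, 0 ≤ L x) (h0 : L 0 = 0) : legendre L 0 = 0 :=
  le_antisymm (legendre_zero_nonpos hnonneg) (le_iSup_of_le 0 (by simp [h0]))

theorem legendre_smul_le_mul {r a : ℝ} (ha : 0 < a) (hL : ∀ z, a * L ((r / a) • z) ≤ L z)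
    (x : EuclideanSpace ℝ (Fin n)) : legendre L (r • x) ≤ (a : EReal) * legendre L x := by
  refine iSup_le fun z => ?_
  set w := (r / a) • z
  have hw : inner ℝ (r • x) z - L z ≤ a * (inner ℝ x w - L w) := by
    have hinner : inner ℝ (r • x) z = a * inner ℝ x w := by
      rw [real_inner_smul_left, real_inner_smul_right]
      field_simp
    rw [hinner, mul_sub]
    linarith [hL z]
  calc (((inner ℝ (r • x) z : ℝ) - L z : ℝ) : EReal)
      ≤ ((a * (inner ℝ x w - L w) : ℝ) : EReal) := EReal.coe_le_coe_iff.mpr hw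
    _ = (a : EReal) * ((inner ℝ x w - L w : ℝ) : EReal) := EReal.coe_mul _ _
    _ ≤ (a : EReal) * legendre L x :=
        mul_le_mul_of_nonneg_left (le_iSup (fun z => ((inner ℝ x z - L z : ℝ) : EReal)) w)
          (EReal.coe_nonneg.mpr ha.le)

theorem legendre_smul_le_rpow {p q r : ℝ} (hpq : p.HolderConjugate q) (hr : 0 < r)
    (hL : ∀ z, L (r ^ (1 - q) • z) ≤ (r ^ (1 - q)) ^ p * L z) (x : EuclideanSpace ℝ (Fin n)) :
    legendre L (r • x) ≤ ((r ^ q : ℝ) : EReal) * legendre L x := by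
  have hdiv : r / r ^ q = r ^ (1 - q) := by rw [rpow_sub hr, rpow_one]
  have hcancel : r ^ q * (r ^ (1 - q)) ^ p = 1 := by
    rw [← rpow_mul hr.le, ← rpow_add hr,
      show q + (1 - q) * p = 0 by linear_combination -hpq.mul_eq_add, rpow_zero]
  refine legendre_smul_le_mul (rpow_pos_of_pos hr q) (fun z => ?_) x
  calc r ^ q * L ((r / r ^ q) • z) ≤ r ^ q * ((r ^ (1 - q)) ^ p * L z) := by
        rw [hdiv]; exact mul_le_mul_of_nonneg_left (hL z) (rpow_nonneg hr.le q)
    _ = L z := by rw [← mul_assoc, hcancel, one_mul]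

theorem legendre_smul_le_rpow_of_one_le {p q : ℝ} (hpq : p.HolderConjugate q)
    (hL : ∀ s : ℝ, 0 < s → s ≤ 1 → ∀ z, L (s • z) ≤ s ^ p * L z) {r : ℝ} (hr : 1 ≤ r)
    (x : EuclideanSpace ℝ (Fin n)) : legendre L (r • x) ≤ ((r ^ q : ℝ) : EReal) * legendre L x :=
  have hr0 : 0 < r := by linarith
  legendre_smul_le_rpow hpq hr0 (hL _ (rpow_pos_of_pos hr0 _)
    (rpow_le_one_of_one_le_of_nonpos hr (by linarith [hpq.symm.lt]))) x

theorem legendre_smul_le_rpow_of_le_one {p q : ℝ} (hpq : p.HolderConjugate q)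
    (hnonneg : ∀ x, 0 ≤ L x) (hL : ∀ s : ℝ, 1 ≤ s → ∀ z, L (s • z) ≤ s ^ p * L z) {r : ℝ} (hr0 : 0 ≤ r) (hr1 : r ≤ 1)
    (x : EuclideanSpace ℝ (Fin n)) :
    legendre L (r • x) ≤ ((r ^ q : ℝ) : EReal) * legendre L x := by
  rcases hr0.eq_or_lt with rfl | hr
  · rw [zero_smul, zero_rpow hpq.symm.ne_zero, EReal.coe_zero, zero_mul]
    exact legendre_zero_nonpos hnonneg
  · exact legendre_smul_le_rpow hpq hr (hL _ (one_le_rpow_of_pos_of_le_one_of_nonpos hr hr1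
      (by linarith [hpq.symm.lt]))) x

end Legendre

theorem stmt11 {n : ℕ} (L : EuclideanSpace ℝ (Fin n) → ℝ)
    (hconv : ConvexOn ℝ Set.univ L) (hnonneg : ∀ x, 0 ≤ L x) (h0 : L 0 = 0)
    (hpos : ∀ x, x ≠ 0 → 0 < L x)
    (hDelta2 : ∃ C : ℝ, ∀ x : EuclideanSpace ℝ (Fin n), L ((2 : ℝ) • x) ≤ C * L x)
    (pminus pplus : ℝ)
    (hpminus : HasDerivWithinAt (PhiL L) pminus (Set.Iio 1) 1)
    (hpplus : HasDerivWithinAt (PhiL L) pplus (Set.Ioi 1) 1)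
    (hp : 1 < pminus) :
    (∀ r : ℝ, 1 ≤ r → ∀ x, legendre L (r • x) ≤
      ((r ^ (pminus / (pminus - 1)) : ℝ) : EReal) * legendre L x) ∧
    (∀ r : ℝ, 0 ≤ r → r ≤ 1 → ∀ x, legendre L (r • x) ≤
      ((r ^ (pplus / (pplus - 1)) : ℝ) : EReal) * legendre L x) ∧
    (∃ C : ℝ, ∀ x, legendre L ((2 : ℝ) • x) ≤ (C : EReal) * legendre L x) := by
  rcases subsingleton_or_nontrivial (EuclideanSpace ℝ (Fin n)) with hE | hE
  · have htrivial : ∀ (c r : ℝ) x, legendre L (r • x) ≤ (c : EReal) * legendre L x := by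
      intro c r x
      rw [Subsingleton.elim x 0, smul_zero, legendre_zero hnonneg h0, mul_zero]
    exact ⟨fun r _ => htrivial _ r, fun r _ _ => htrivial _ r, 0, htrivial 0 2⟩
  have hfin (r : ℝ) (hr : 0 < r) : ∃ B : ℝ, ∀ x, L (r • x) ≤ B * L x :=
    exists_apply_smul_le_mul_of_delta2 hconv hnonneg h0 hDelta2 hr.le
  have hpplus_gt : 1 < pplus :=
    hp.trans_le (le_of_hasDerivWithinAt_phiL_Iio_Ioi hpos hfin hpminus hpplus)
  have hlarge (r : ℝ) (hr : 1 ≤ r) := legendre_smul_le_rpow_of_one_le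
    (.conjExponent hp) (fun _ => apply_smul_le_rpow_of_le_one hpos hfin h0 hpminus) hr
  have hsmall (r : ℝ) (hr0 : 0 ≤ r) (hr1 : r ≤ 1) := legendre_smul_le_rpow_of_le_one
    (.conjExponent hpplus_gt) hnonneg (fun _ => apply_smul_le_rpow_of_one_le hpos hfin h0 hpplus)
    hr0 hr1
  exact ⟨hlarge, hsmall, _, hlarge 2 one_le_two⟩
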